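/- Define s(r₂) = r₂·(λ(1−aā) + 2λ̄aā) − λ̄āa, D₁(r₂) = s(r₂)² − 4λ̄aā·r₂·(λ(ā²+a²)·r₂ + λāa), and r₂* = λ̄āa/(λ(1−aā) + 2λ̄aā). Then: 0 < r₂* < 1; D₁(0) > 0; D₁(r₂*) < 0; D₁(1) = (λ(ā²+a²+āa) − λ̄aā)² ≥ 0. Consequently D₁ has a real zero in the open interval (0, r₂*) and a real zero in the interval (r₂*, 1]. -/
import Mathlib


/-- s(r₂) = r₂(λ(1−aā)+2λ̄aā) − λ̄āa. -/
def sAux (a lam r : ℝ) : ℝ :=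
  r * (lam*(1 - a*(1-a)) + 2*(1-lam)*a*(1-a)) - (1-lam)*(1-a)*a

/-- D₁(r₂) = s(r₂)² − 4λ̄aā·r₂·(λ(ā²+a²)r₂ + λāa). -/
def D1Aux (a lam r : ℝ) : ℝ :=
  (sAux a lam r)^2 - 4*(1-lam)*a*(1-a)*r*(lam*((1-a)^2+a^2)*r + lam*(1-a)*a)

/-- r₂* = λ̄āa/(λ(1−aā)+2λ̄aā). -/
noncomputable def r2Star (a lam : ℝ) : ℝ :=
  (1-lam)*(1-a)*a / (lam*(1 - a*(1-a)) + 2*(1-lam)*a*(1-a))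

lemma D1_cont (a lam : ℝ) : Continuous fun r => D1Aux a lam r := by
  unfold D1Aux sAux; fun_prop

/-- 0 < r₂* < 1, D₁(0) > 0, D₁(r₂*) < 0,
D₁(1) = (λ(ā²+a²+āa) − λ̄aā)² ≥ 0; consequently D₁ has a zero in (0, r₂*) and a
zero in (r₂*, 1]. -/
theorem stmt16 (a lam : ℝ) (ha : 0 < a) (ha1 : a < 1) (hl : 0 < lam) (hl1 : lam < 1) :
    0 < r2Star a lam ∧ r2Star a lam < 1 ∧
    0 < D1Aux a lam 0 ∧ D1Aux a lam (r2Star a lam) < 0 ∧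
    D1Aux a lam 1 = (lam*((1-a)^2+a^2+(1-a)*a) - (1-lam)*a*(1-a))^2 ∧
    0 ≤ D1Aux a lam 1 ∧
    (∃ x ∈ Set.Ioo 0 (r2Star a lam), D1Aux a lam x = 0) ∧
    (∃ y ∈ Set.Ioc (r2Star a lam) 1, D1Aux a lam y = 0) := by
  have ha' : 0 < 1 - a := by linarith
  have hl' : 0 < 1 - lam := by linarith
  have haa : 0 < 1 - a*(1-a) := by nlinarith [sq_nonneg (1-2*a)]
  have hd : 0 < lam*(1 - a*(1-a)) + 2*(1-lam)*a*(1-a) := by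
    have := mul_pos hl haa
    have := mul_pos (mul_pos hl' ha) ha'
    nlinarith
  have hnum : 0 < (1-lam)*(1-a)*a := by positivity
  have h1 : 0 < r2Star a lam := div_pos hnum hd
  have h2 : r2Star a lam < 1 := by
    rw [r2Star, div_lt_one hd]
    have := mul_pos hl haa
    have := mul_pos (mul_pos hl' ha) ha'
    nlinarith
  have hs : sAux a lam (r2Star a lam) = 0 := by
    rw [sAux, r2Star, div_mul_cancel₀ _ hd.ne']; ring
  have h3 : 0 < D1Aux a lam 0 := by
    have : D1Aux a lam 0 = ((1-lam)*(1-a)*a)^2 := by unfold D1Aux sAux; ring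
    rw [this]; positivity
  have h4 : D1Aux a lam (r2Star a lam) < 0 := by
    rw [D1Aux, hs]
    have hpos : 0 < 4*(1-lam)*a*(1-a)*(r2Star a lam)*
        (lam*((1-a)^2+a^2)*(r2Star a lam) + lam*(1-a)*a) := by
      have p2 : 0 < lam*(1-a)*a := by positivity
      have p1 : 0 < lam*((1-a)^2+a^2)*(r2Star a lam) :=
        mul_pos (by positivity) h1
      have p3 : 0 < 4*(1-lam)*a*(1-a)*(r2Star a lam) :=
        mul_pos (by positivity) h1
      exact mul_pos p3 (by linarith)
    linarith
  have h5 : D1Aux a lam 1 = (lam*((1-a)^2+a^2+(1-a)*a) - (1-lam)*a*(1-a))^2 := by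
    unfold D1Aux sAux; ring
  have h6 : 0 ≤ D1Aux a lam 1 := by rw [h5]; positivity
  refine ⟨h1, h2, h3, h4, h5, h6, ?_, ?_⟩
  · have hc : ContinuousOn (fun r => D1Aux a lam r) (Set.Icc 0 (r2Star a lam)) :=
      (D1_cont a lam).continuousOn
    have := intermediate_value_Ioo' (le_of_lt h1) hc
    have h0 : (0:ℝ) ∈ Set.Ioo (D1Aux a lam (r2Star a lam)) (D1Aux a lam 0) := ⟨h4, h3⟩
    obtain ⟨x, hx, hfx⟩ := this h0
    exact ⟨x, hx, hfx⟩
  · have hc : ContinuousOn (fun r => D1Aux a lam r) (Set.Icc (r2Star a lam) 1) :=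
      (D1_cont a lam).continuousOn
    have := intermediate_value_Ioc (le_of_lt h2) hc
    have h0 : (0:ℝ) ∈ Set.Ioc (D1Aux a lam (r2Star a lam)) (D1Aux a lam 1) := ⟨h4, h6⟩
    obtain ⟨y, hy, hfy⟩ := this h0
    exact ⟨y, hy, hfy⟩
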